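/- arXiv:1205.0958 — 5 statements merged into one kernel-verified Lean document; each statement's English description precedes it below -/
import Mathlib

section
/- Let Q : ℝ^n → ℝ be the quadratic polynomial Q(x) = N·x + xᵀMx, where N ∈ ℝ^n has all coordinates negative and |N_i| ≥ |N_j| whenever i ≤ j, and M ∈ ℝ^{n×n}. Define M₀ = max over pairs i ≤ j of max((M_{ij}+M_{ji})/(-N_i), 0). If M₀ > 0, then for every x with all coordinates nonnegative, x ≠ 0, and ∑_i x_i < 1/M₀, we have Q(x) < 0. -/
/-! Put `a = -N > 0` and `S = ∑ xᵢ`. Every symmetrised entry obeys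
`M i j + M j i ≤ M₀ (aᵢ + aⱼ)`: for `i ≤ j` it is at most `M₀ aᵢ` by the choice of `M₀`.
Summing against `xᵢ xⱼ ≥ 0` gives `xᵀ M x ≤ M₀ (a · x) S`, hence
`Q(x) ≤ -(a · x)(1 - M₀ S) < 0`, since `a · x > 0` and `M₀ S < 1`. -/

open Finset

theorem add_swap_le_mul_add_of_le {ι : Type*} [LinearOrder ι] {M : Matrix ι ι ℝ} {a : ι → ℝ} {c : ℝ}
    (ha : ∀ i, 0 < a i) (hc : 0 ≤ c) (h : ∀ i j, i ≤ j → M i j + M j i ≤ c * a i)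
    (i j : ι) : M i j + M j i ≤ c * (a i + a j) := by
  rcases le_total i j with hij | hji
  · nlinarith [h i j hij, ha j]
  · nlinarith [h j i hji, ha i]

section
variable {ι : Type*} [Fintype ι]

theorem sum_mul_mul_le_of_add_swap_le {M : Matrix ι ι ℝ} {a x : ι → ℝ} {c : ℝ}
    (hx : ∀ i, 0 ≤ x i) (hM : ∀ i j, M i j + M j i ≤ c * (a i + a j)) :
    ∑ i, ∑ j, x i * M i j * x j ≤ c * (∑ i, a i * x i) * ∑ i, x i := by
  have hsymm : 2 * ∑ i, ∑ j, x i * M i j * x j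
      = ∑ i, ∑ j, (M i j + M j i) * (x i * x j) := by
    rw [two_mul]
    nth_rewrite 2 [sum_comm]
    simp only [← sum_add_distrib]
    exact sum_congr rfl fun i _ => sum_congr rfl fun j _ => by ring
  have hbound : ∑ i, ∑ j, (M i j + M j i) * (x i * x j)
      ≤ ∑ i, ∑ j, c * (a i + a j) * (x i * x j) := by
    gcongr with i _ j _
    · exact mul_nonneg (hx i) (hx j)
    · exact hM i j
  have hexpand : ∑ i, ∑ j, c * (a i + a j) * (x i * x j)
      = 2 * (c * (∑ i, a i * x i) * ∑ i, x i) := by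
    have h : c * (∑ i, a i * x i) * ∑ j, x j = ∑ i, ∑ j, c * a i * (x i * x j) := by
      rw [mul_sum (a := c), sum_mul_sum]
      exact sum_congr rfl fun i _ => sum_congr rfl fun j _ => by ring
    rw [two_mul, h]
    conv_rhs => arg 2; rw [sum_comm]
    simp only [← sum_add_distrib]
    exact sum_congr rfl fun i _ => sum_congr rfl fun j _ => by ring
  linarith

theorem sum_mul_pos_of_ne_zero {a x : ι → ℝ} (ha : ∀ i, 0 < a i) (hx : ∀ i, 0 ≤ x i)
    (hx0 : x ≠ 0) : 0 < ∑ i, a i * x i := by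
  obtain ⟨i, hi⟩ := Function.ne_iff.1 hx0
  exact sum_pos' (fun j _ => mul_nonneg (ha j).le (hx j))
    ⟨i, mem_univ i, mul_pos (ha i) ((hx i).lt_of_ne' hi)⟩

theorem linear_add_quadratic_neg_of_add_swap_le {N x : ι → ℝ} {M : Matrix ι ι ℝ} {c : ℝ}
    (hN : ∀ i, N i < 0) (hx : ∀ i, 0 ≤ x i) (hx0 : x ≠ 0)
    (hM : ∀ i j, M i j + M j i ≤ c * (-N i + -N j)) (hc : c * ∑ i, x i < 1) :
    (∑ i, N i * x i) + ∑ i, ∑ j, x i * M i j * x j < 0 := by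
  have hpos : 0 < ∑ i, -N i * x i := sum_mul_pos_of_ne_zero (fun i => neg_pos.2 (hN i)) hx hx0
  have hquad := sum_mul_mul_le_of_add_swap_le hx hM
  have hlin : ∑ i, N i * x i = -∑ i, -N i * x i := by simp
  rw [hlin]
  nlinarith [mul_pos hpos (sub_pos.2 hc)]

end

theorem quadratic_negative_on_small_simplex_general
    {n : ℕ} [NeZero n] (N : Fin n → ℝ) (M : Matrix (Fin n) (Fin n) ℝ)
    (hN : ∀ i, N i < 0)
    (M0 : ℝ)
    (hM0 : M0 = Finset.univ.sup' Finset.univ_nonempty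
      (fun p : Fin n × Fin n =>
        if p.1 ≤ p.2 then max ((M p.1 p.2 + M p.2 p.1) / (-N p.1)) 0 else 0))
    (hM0pos : 0 < M0)
    (x : Fin n → ℝ) (hx : ∀ i, 0 ≤ x i) (hx0 : x ≠ 0)
    (hsum : ∑ i, x i < 1 / M0) :
    (∑ i, N i * x i) + ∑ i, ∑ j, x i * M i j * x j < 0 := by
  have hordered : ∀ i j, i ≤ j → M i j + M j i ≤ M0 * -N i := by
    intro i j hij
    have hratio : (M i j + M j i) / -N i ≤ M0 :=
      hM0 ▸ (le_max_left _ _).trans (le_sup'_of_le _ (mem_univ (i, j)) (if_pos hij).ge)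
    exact (div_le_iff₀ (neg_pos.2 (hN i))).1 hratio
  have hsymm := add_swap_le_mul_add_of_le (fun i => neg_pos.2 (hN i)) hM0pos.le hordered
  refine linear_add_quadratic_neg_of_add_swap_le hN hx hx0 hsymm ?_
  rwa [lt_div_iff₀ hM0pos, mul_comm] at hsum

theorem quadratic_negative_on_small_simplex
    {n : ℕ} [NeZero n] (N : Fin n → ℝ) (M : Matrix (Fin n) (Fin n) ℝ)
    (hN : ∀ i, N i < 0)
    (hord : ∀ i j : Fin n, i ≤ j → |N j| ≤ |N i|)
    (M0 : ℝ)
    (hM0 : M0 = Finset.univ.sup' Finset.univ_nonempty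
      (fun p : Fin n × Fin n =>
        if p.1 ≤ p.2 then max ((M p.1 p.2 + M p.2 p.1) / (-N p.1)) 0 else 0))
    (hM0pos : 0 < M0)
    (x : Fin n → ℝ) (hx : ∀ i, 0 ≤ x i) (hx0 : x ≠ 0)
    (hsum : ∑ i, x i < 1 / M0) :
    (∑ i, N i * x i) + ∑ i, ∑ j, x i * M i j * x j < 0 :=
  quadratic_negative_on_small_simplex_general N M hN M0 hM0 hM0pos x hx hx0 hsum
end

section
/- Under the hypotheses N_i < 0, |N_i| ≥ |N_j| for i ≤ j, and M₀ = max_{i, j≥i} max{(M_{ij}+M_{ji})/(-N_i), 0} > 0, every vector v with nonnegative coordinates summing to 1 satisfies vᵀMv ≤ M₀ · (-N·v). -/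
open Finset

theorem quadratic_form_le_M0_mul_linear
    {n : ℕ} [NeZero n] (N : Fin n → ℝ) (M : Matrix (Fin n) (Fin n) ℝ)
    (hN : ∀ i, N i < 0)
    (hord : ∀ i j : Fin n, i ≤ j → |N j| ≤ |N i|)
    (M0 : ℝ)
    (hM0 : M0 = Finset.univ.sup' Finset.univ_nonempty
      (fun p : Fin n × Fin n =>
        if p.1 ≤ p.2 then max ((M p.1 p.2 + M p.2 p.1) / (-N p.1)) 0 else 0))
    (hM0pos : 0 < M0)
    (v : Fin n → ℝ) (hv : ∀ i, 0 ≤ v i) (hvsum : ∑ i, v i = 1) :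
    (∑ i, ∑ j, v i * M i j * v j) ≤ M0 * (∑ i, (-(N i)) * v i) := by
  have hNpos : ∀ i, 0 < -N i := fun i => by linarith [hN i]
  have key : ∀ i j : Fin n, i ≤ j → M i j + M j i ≤ M0 * (-N i) := by
    intro i j hij
    have hNi := hNpos i
    have hle : (M i j + M j i) / (-N i) ≤ M0 := by
      rw [hM0]
      calc (M i j + M j i) / (-N i)
          ≤ max ((M i j + M j i) / (-N i)) 0 := le_max_left _ _
        _ = (fun p : Fin n × Fin n =>
              if p.1 ≤ p.2 then max ((M p.1 p.2 + M p.2 p.1) / (-N p.1)) 0 else 0) (i, j) := by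
              simp [hij]
        _ ≤ _ := Finset.le_sup'
              (f := fun p : Fin n × Fin n =>
                if p.1 ≤ p.2 then max ((M p.1 p.2 + M p.2 p.1) / (-N p.1)) 0 else 0)
              (Finset.mem_univ (i, j))
    have := (div_le_iff₀ hNi).mp hle
    linarith
  have key2 : ∀ i j : Fin n, M i j + M j i ≤ M0 * ((-N i) + (-N j)) := by
    intro i j
    rcases le_total i j with h | h
    · have h1 := key i j h
      have h2 := hNpos j
      nlinarith
    · have h1 := key j i h
      have h2 := hNpos i
      nlinarith
  have term : ∀ i j : Fin n,
      v i * v j * (M i j + M j i) ≤ v i * v j * (M0 * ((-N i) + (-N j))) := by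
    intro i j
    exact mul_le_mul_of_nonneg_left (key2 i j) (mul_nonneg (hv i) (hv j))
  have hsum : (∑ i, ∑ j, v i * v j * (M i j + M j i))
      ≤ ∑ i, ∑ j, v i * v j * (M0 * ((-N i) + (-N j))) := by
    apply Finset.sum_le_sum
    intro i _
    exact Finset.sum_le_sum fun j _ => term i j
  have lhs_eq : (∑ i, ∑ j, v i * v j * (M i j + M j i))
      = 2 * ∑ i, ∑ j, v i * M i j * v j := by
    have swap : (∑ i, ∑ j, v i * v j * M j i) = ∑ i, ∑ j, v i * M i j * v j := by
      rw [Finset.sum_comm]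
      refine Finset.sum_congr rfl fun i _ => Finset.sum_congr rfl fun j _ => by ring
    simp_rw [mul_add, Finset.sum_add_distrib]
    rw [swap]
    have : (∑ i, ∑ j, v i * v j * M i j) = ∑ i, ∑ j, v i * M i j * v j := by
      refine Finset.sum_congr rfl fun i _ => Finset.sum_congr rfl fun j _ => by ring
    rw [this]; ring
  have inner : ∀ c : ℝ, (∑ j, c * v j) = c := fun c => by
    rw [← Finset.mul_sum, hvsum, mul_one]
  have rhs_eq : (∑ i, ∑ j, v i * v j * (M0 * ((-N i) + (-N j))))
      = 2 * (M0 * (∑ i, (-(N i)) * v i)) := by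
    have split : ∀ i j : Fin n, v i * v j * (M0 * ((-N i) + (-N j)))
        = (v i * (M0 * (-N i))) * v j + (v j * (M0 * (-N j))) * v i := by
      intro i j; ring
    simp_rw [split, Finset.sum_add_distrib]
    have A : (∑ i, ∑ j, (v i * (M0 * (-N i))) * v j)
        = M0 * (∑ i, (-(N i)) * v i) := by
      have : ∀ i : Fin n, (∑ j, (v i * (M0 * (-N i))) * v j) = v i * (M0 * (-N i)) :=
        fun i => inner _
      simp_rw [this]
      rw [Finset.mul_sum]
      exact Finset.sum_congr rfl fun i _ => by ring
    have B : (∑ i, ∑ j, (v j * (M0 * (-N j))) * v i)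
        = M0 * (∑ i, (-(N i)) * v i) := by
      rw [Finset.sum_comm]
      have : ∀ j : Fin n, (∑ i, (v j * (M0 * (-N j))) * v i) = v j * (M0 * (-N j)) :=
        fun j => inner _
      simp_rw [this]
      rw [Finset.mul_sum]
      exact Finset.sum_congr rfl fun i _ => by ring
    rw [A, B]; ring
  rw [lhs_eq, rhs_eq] at hsum
  linarith
end

section
/- For any two strategies s, s* in the repeated prisoners' dilemma and any finite history h_t, if the payoff along the joint path from h_t decomposes as U_δ(h_{s*,s/h_t}) = b₁R + b₂S + b₃T + b₄P (with b_i the discounted frequencies of each outcome), then the payoff of the swapped pairing from the swapped seed satisfies U_δ(h_{s,s*/ĥ_t}) = b₁R + b₂T + b₃S + b₄P. Consequently U_δ(h_{s,s*/h_t}) + U_δ(h_{s*,s/ĥ_t}) ≤ 2R. -/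
open Finset

/-- A (pure) strategy in the repeated prisoners' dilemma
(`true` = cooperate, `false` = defect). -/
abbrev Strategy := List (Bool × Bool) → Bool

/-- The same history from the other player's viewpoint. -/
def swapHist (h : List (Bool × Bool)) : List (Bool × Bool) := h.map Prod.swap

/-- The no-mistake continuation: the history after `k` more periods when
`s₁` plays `s₂` starting from the seed history `h`. -/
def pathFrom (s₁ s₂ : Strategy) (h : List (Bool × Bool)) : ℕ → List (Bool × Bool)
  | 0 => h
  | k + 1 =>
    pathFrom s₁ s₂ h k ++
      [(s₁ (pathFrom s₁ s₂ h k), s₂ (swapHist (pathFrom s₁ s₂ h k)))]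

/-- The action pair played `k` periods after the seed on the no-mistake path. -/
def pairAt (s₁ s₂ : Strategy) (h : List (Bool × Bool)) (k : ℕ) : Bool × Bool :=
  (s₁ (pathFrom s₁ s₂ h k), s₂ (swapHist (pathFrom s₁ s₂ h k)))

/-- Stage-game payoff for player one. -/
def payoff (T R P S : ℝ) : Bool × Bool → ℝ
  | (true, true) => R
  | (true, false) => S
  | (false, true) => T
  | (false, false) => P

/-- Normalized discounted payoff of `s₁` along the no-mistake path against
`s₂` with seed `h`. -/
noncomputable def Upath (δ T R P S : ℝ) (s₁ s₂ : Strategy)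
    (h : List (Bool × Bool)) : ℝ :=
  (1 - δ) * ∑' k : ℕ, δ ^ k * payoff T R P S (pairAt s₁ s₂ h k)

lemma swapHist_swapHist (h : List (Bool × Bool)) : swapHist (swapHist h) = h := by
  simp [swapHist, List.map_map]

lemma pathFrom_swap (s₁ s₂ : Strategy) (h : List (Bool × Bool)) (k : ℕ) :
    pathFrom s₂ s₁ (swapHist h) k = swapHist (pathFrom s₁ s₂ h k) := by
  induction k with
  | zero => rfl
  | succ k ih =>
    simp only [pathFrom, ih, swapHist_swapHist]
    simp [swapHist]

lemma pairAt_swap (s₁ s₂ : Strategy) (h : List (Bool × Bool)) (k : ℕ) :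
    pairAt s₂ s₁ (swapHist h) k = Prod.swap (pairAt s₁ s₂ h k) := by
  simp [pairAt, pathFrom_swap, swapHist_swapHist, Prod.swap]

lemma summable_ind (δ : ℝ) (hδ0 : 0 ≤ δ) (hδ1 : δ < 1) (f : ℕ → Prop) [DecidablePred f] :
    Summable (fun k => if f k then δ ^ k else 0) := by
  refine Summable.of_nonneg_of_le (fun k => ?_) (fun k => ?_)
    (summable_geometric_of_lt_one hδ0 hδ1)
  · split <;> positivity
  · split
    · exact le_rfl
    · positivity

lemma tsum_mul_right' {f : ℕ → ℝ} (a : ℝ) : ∑' k, f k * a = (∑' k, f k) * a :=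
  tsum_mul_right

lemma Upath_decomp (δ T R P S : ℝ) (hδ0 : 0 ≤ δ) (hδ1 : δ < 1)
    (s₁ s₂ : Strategy) (h : List (Bool × Bool)) :
    Upath δ T R P S s₁ s₂ h =
      ((1-δ) * ∑' k, if pairAt s₁ s₂ h k = (true,true) then δ^k else 0) * R
    + ((1-δ) * ∑' k, if pairAt s₁ s₂ h k = (true,false) then δ^k else 0) * S
    + ((1-δ) * ∑' k, if pairAt s₁ s₂ h k = (false,true) then δ^k else 0) * T
    + ((1-δ) * ∑' k, if pairAt s₁ s₂ h k = (false,false) then δ^k else 0) * P := by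
  have h1 := summable_ind δ hδ0 hδ1 (fun k => pairAt s₁ s₂ h k = (true,true))
  have h2 := summable_ind δ hδ0 hδ1 (fun k => pairAt s₁ s₂ h k = (true,false))
  have h3 := summable_ind δ hδ0 hδ1 (fun k => pairAt s₁ s₂ h k = (false,true))
  have h4 := summable_ind δ hδ0 hδ1 (fun k => pairAt s₁ s₂ h k = (false,false))
  have key : ∀ k, δ^k * payoff T R P S (pairAt s₁ s₂ h k) =
      (if pairAt s₁ s₂ h k = (true,true) then δ^k else 0) * R
    + (if pairAt s₁ s₂ h k = (true,false) then δ^k else 0) * S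
    + (if pairAt s₁ s₂ h k = (false,true) then δ^k else 0) * T
    + (if pairAt s₁ s₂ h k = (false,false) then δ^k else 0) * P := by
    intro k
    rcases hp : pairAt s₁ s₂ h k with ⟨a,b⟩
    cases a <;> cases b <;> simp [payoff]
  rw [Upath, tsum_congr key,
    Summable.tsum_add (((h1.mul_right R).add (h2.mul_right S)).add (h3.mul_right T)) (h4.mul_right P),
    Summable.tsum_add ((h1.mul_right R).add (h2.mul_right S)) (h3.mul_right T),
    Summable.tsum_add (h1.mul_right R) (h2.mul_right S),
    tsum_mul_right', tsum_mul_right', tsum_mul_right', tsum_mul_right']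
  ring

lemma ind_swap (δ : ℝ) (s₁ s₂ : Strategy) (h : List (Bool × Bool)) (x y : Bool) :
    (∑' k, if pairAt s₂ s₁ (swapHist h) k = (x,y) then δ^k else 0)
    = ∑' k, if pairAt s₁ s₂ h k = (y,x) then δ^k else 0 := by
  refine tsum_congr fun k => ?_
  rw [pairAt_swap]
  rcases hp : pairAt s₁ s₂ h k with ⟨a,b⟩
  simp [Prod.ext_iff, and_comm]

lemma ind_sum_one (δ : ℝ) (hδ0 : 0 ≤ δ) (hδ1 : δ < 1)
    (s₁ s₂ : Strategy) (h : List (Bool × Bool)) :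
      ((1-δ) * ∑' k, if pairAt s₁ s₂ h k = (true,true) then δ^k else 0)
    + ((1-δ) * ∑' k, if pairAt s₁ s₂ h k = (true,false) then δ^k else 0)
    + ((1-δ) * ∑' k, if pairAt s₁ s₂ h k = (false,true) then δ^k else 0)
    + ((1-δ) * ∑' k, if pairAt s₁ s₂ h k = (false,false) then δ^k else 0) = 1 := by
  have h1 := summable_ind δ hδ0 hδ1 (fun k => pairAt s₁ s₂ h k = (true,true))
  have h2 := summable_ind δ hδ0 hδ1 (fun k => pairAt s₁ s₂ h k = (true,false))
  have h3 := summable_ind δ hδ0 hδ1 (fun k => pairAt s₁ s₂ h k = (false,true))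
  have h4 := summable_ind δ hδ0 hδ1 (fun k => pairAt s₁ s₂ h k = (false,false))
  have key : ∀ k, (if pairAt s₁ s₂ h k = (true,true) then δ^k else 0)
    + (if pairAt s₁ s₂ h k = (true,false) then δ^k else 0)
    + (if pairAt s₁ s₂ h k = (false,true) then δ^k else 0)
    + (if pairAt s₁ s₂ h k = (false,false) then δ^k else 0) = δ^k := by
    intro k
    rcases hp : pairAt s₁ s₂ h k with ⟨a,b⟩
    cases a <;> cases b <;> simp
  have hsum : (∑' k, if pairAt s₁ s₂ h k = (true,true) then δ^k else 0)
    + (∑' k, if pairAt s₁ s₂ h k = (true,false) then δ^k else 0)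
    + (∑' k, if pairAt s₁ s₂ h k = (false,true) then δ^k else 0)
    + (∑' k, if pairAt s₁ s₂ h k = (false,false) then δ^k else 0)
    = ∑' k : ℕ, δ^k := by
    rw [← Summable.tsum_add h1 h2, ← Summable.tsum_add (h1.add h2) h3, ← Summable.tsum_add ((h1.add h2).add h3) h4]
    exact tsum_congr key
  have hgeo : (∑' k : ℕ, δ^k) = (1 - δ)⁻¹ := tsum_geometric_of_lt_one hδ0 hδ1
  have hne : (1 : ℝ) - δ ≠ 0 := by linarith
  field_simp [← mul_add, ← hsum] at *
  nlinarith [hsum, hgeo]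

theorem swapped_seed_payoff_decomposition
    (T R P S δ : ℝ) (hTR : R < T) (hRP : P < R) (hPS : S < P)
    (heff : T + S < 2 * R) (hδ0 : 0 ≤ δ) (hδ1 : δ < 1)
    (s sstar : Strategy) (h : List (Bool × Bool))
    (b₁ b₂ b₃ b₄ : ℝ)
    (hb₁ : b₁ = (1 - δ) * ∑' k : ℕ,
      if pairAt sstar s h k = (true, true) then δ ^ k else 0)
    (hb₂ : b₂ = (1 - δ) * ∑' k : ℕ,
      if pairAt sstar s h k = (true, false) then δ ^ k else 0)
    (hb₃ : b₃ = (1 - δ) * ∑' k : ℕ,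
      if pairAt sstar s h k = (false, true) then δ ^ k else 0)
    (hb₄ : b₄ = (1 - δ) * ∑' k : ℕ,
      if pairAt sstar s h k = (false, false) then δ ^ k else 0) :
    Upath δ T R P S sstar s h = b₁ * R + b₂ * S + b₃ * T + b₄ * P ∧
    Upath δ T R P S s sstar (swapHist h) = b₁ * R + b₂ * T + b₃ * S + b₄ * P ∧
    Upath δ T R P S s sstar h + Upath δ T R P S sstar s (swapHist h) ≤ 2 * R := by
  refine ⟨?_, ?_, ?_⟩
  · rw [hb₁, hb₂, hb₃, hb₄]
    exact Upath_decomp δ T R P S hδ0 hδ1 sstar s h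
  · rw [hb₁, hb₂, hb₃, hb₄,
      Upath_decomp δ T R P S hδ0 hδ1 s sstar (swapHist h),
      ind_swap, ind_swap, ind_swap, ind_swap]
    ring
  · set c₁ := (1-δ) * ∑' k, if pairAt s sstar h k = (true,true) then δ^k else 0 with hc₁
    set c₂ := (1-δ) * ∑' k, if pairAt s sstar h k = (true,false) then δ^k else 0 with hc₂
    set c₃ := (1-δ) * ∑' k, if pairAt s sstar h k = (false,true) then δ^k else 0 with hc₃
    set c₄ := (1-δ) * ∑' k, if pairAt s sstar h k = (false,false) then δ^k else 0 with hc₄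
    have e1 : Upath δ T R P S s sstar h = c₁ * R + c₂ * S + c₃ * T + c₄ * P :=
      Upath_decomp δ T R P S hδ0 hδ1 s sstar h
    have e2 : Upath δ T R P S sstar s (swapHist h) = c₁ * R + c₃ * S + c₂ * T + c₄ * P := by
      rw [Upath_decomp δ T R P S hδ0 hδ1 sstar s (swapHist h),
        ind_swap, ind_swap, ind_swap, ind_swap, hc₁, hc₂, hc₃, hc₄]
    have hone : c₁ + c₂ + c₃ + c₄ = 1 := ind_sum_one δ hδ0 hδ1 s sstar h
    have hδ' : (0:ℝ) ≤ 1 - δ := by linarith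
    have nn : ∀ (p : Bool × Bool),
        0 ≤ (1-δ) * ∑' k, if pairAt s sstar h k = p then δ^k else 0 := by
      intro p
      refine mul_nonneg hδ' (tsum_nonneg fun k => ?_)
      split <;> positivity
    have n1 : 0 ≤ c₁ := nn (true,true)
    have n2 : 0 ≤ c₂ := nn (true,false)
    have n3 : 0 ≤ c₃ := nn (false,true)
    have n4 : 0 ≤ c₄ := nn (false,false)
    have m1 : (c₂ + c₃) * (T + S) ≤ (c₂ + c₃) * (2 * R) :=
      mul_le_mul_of_nonneg_left heff.le (by linarith)
    have m2 : c₄ * P ≤ c₄ * R := mul_le_mul_of_nonneg_left hRP.le n4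
    have m3 : (c₁ + c₂ + c₃ + c₄) * (2 * R) = 2 * R := by rw [hone]; ring
    rw [e1, e2]
    nlinarith [m1, m2, m3]
end

section
/- Win-stay-lose-shift is a uniformly strict subgame perfect strategy when 2R > T + P: there exist constants C₀ > 0 and thresholds δ₀, p₀ < 1 (depending only on T, R, P, S) such that for all δ > δ₀, p > p₀, any deviating strategy s, and any finite history h_k at which s first deviates from w, the equilibrium-path payoffs satisfy U_{δ,p}(h_{w,w/h_k}) − U_{δ,p}(h_{s,w/h_k}) > (1 − p²δ) C₀; one may take C₀ = min{P − S, 2R − (T + P) − ε} for small ε. -/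
open Finset

/-- Equilibrium-path payoff with trembles of accuracy `p`, with the
normalization `(1 - p²δ)/p² · ∑ δ^t p^(2t+2) u`. -/
noncomputable def UEq (δ p T R P S : ℝ) (s₁ s₂ : Strategy)
    (h : List (Bool × Bool)) : ℝ :=
  ((1 - p ^ 2 * δ) / p ^ 2) *
    ∑' t : ℕ, δ ^ t * p ^ (2 * t + 2) * payoff T R P S (pairAt s₁ s₂ h t)

/-- Win-stay-lose-shift: cooperate initially; repeat the previous action after
receiving `T` or `R`, switch after receiving `S` or `P`. -/
def wsls : Strategy := fun h =>
  match h.getLast? with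
  | none => true
  | some (a, b) => a == b


/-!
Write `x = p²δ`. Up to the factor `1 - x`, the payoff difference is `∑ xᵗ Lₜ`, where `Lₜ` is what
the deviator `s` loses in period `t` by playing itself rather than `wsls` against `wsls`. After the
seed, `wsls` against itself cooperates forever, so for `t ≥ 1` the loss `Lₜ` is negative only when
`s` earns `T`; `wsls` then defects in the next period, where `s` gets at most `P`, so
`Lₜ₊₁ ≥ R - P`. Pairing every such period with its successor makes the tail sum nonnegative once
`R - T + x (R - P) ≥ 0`. At the seed the deviation costs `R - T` or `P - S`, and `wsls` defects in
period one in either case, so the first two periods contribute at least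
`min (P - S) (R - T) + x (R - P)`, which exceeds `C₀` for `x` close to `1`.
-/

theorem tsum_nonneg_of_pairing {a : ℕ → ℝ} (ha : Summable a) (B : ℕ → Prop) [DecidablePred B]
    (hnB : ∀ t, ¬B t → 0 ≤ a t) (hB : ∀ t, B t → 0 ≤ a (t + 1))
    (hBB : ∀ t, B t → 0 ≤ a t + a (t + 1)) : 0 ≤ ∑' t, a t := by
  set c : ℕ → ℝ := fun t => if B t then a (t + 1) else 0 with hc_def
  -- `e` is `c` delayed by one period, so `a + c - e` moves `a (t + 1)` to period `t` when `B t`.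
  set e : ℕ → ℝ := fun t => Nat.casesOn t 0 c
  have hc : Summable c := by
    refine Summable.of_norm_bounded ((summable_nat_add_iff 1).2 ha).abs fun t => ?_
    simp only [hc_def, Real.norm_eq_abs]
    split_ifs <;> simp
  have he : Summable e := (summable_nat_add_iff 1).1 hc
  have hce : ∑' t, e t = ∑' t, c t := by
    rw [he.tsum_eq_zero_add]
    exact zero_add _
  have hc_nonneg : ∀ t, 0 ≤ c t := fun t => by
    simp only [hc_def]
    split_ifs with h
    exacts [hB t h, le_rfl]
  have hac : ∀ t, 0 ≤ a t + c t := fun t => by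
    simp only [hc_def]
    split_ifs with h
    exacts [hBB t h, by simpa using hnB t h]
  have hterm : ∀ t, 0 ≤ a t + c t - e t := by
    rintro (_ | n)
    · show 0 ≤ a 0 + c 0 - 0
      simpa using hac 0
    · show 0 ≤ a (n + 1) + c (n + 1) - c n
      by_cases hn : B n
      · simpa [hc_def, hn] using hc_nonneg (n + 1)
      · simpa [hc_def, hn] using hac (n + 1)
  calc 0 ≤ ∑' t, (a t + c t - e t) := tsum_nonneg hterm
    _ = ∑' t, a t := by rw [(ha.add hc).tsum_sub he, ha.tsum_add hc, hce, add_sub_cancel_right]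

theorem exists_one_sub_sq_mul_lt {η : ℝ} (hη : 0 < η) :
    ∃ q : ℝ, 0 ≤ q ∧ q < 1 ∧
      ∀ δ p : ℝ, q < δ → δ < 1 → q < p → p < 1 → 1 - p ^ 2 * δ < η := by
  refine ⟨max 0 (1 - η / 3), le_max_left _ _, max_lt one_pos (by linarith), ?_⟩
  intro δ p hδ hδ1 hp hp1
  rw [max_lt_iff] at hδ hp
  have hsq : 1 - p ^ 2 < 2 * (η / 3) := by nlinarith
  nlinarith

section Payoff

variable {T R P S : ℝ}

theorem abs_payoff_le (q : Bool × Bool) : |payoff T R P S q| ≤ |T| + |R| + |P| + |S| := by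
  rcases q with ⟨_ | _, _ | _⟩ <;> simp only [payoff] <;>
    linarith [abs_nonneg T, abs_nonneg R, abs_nonneg P, abs_nonneg S]

theorem payoff_le_of_snd_eq_false (hSP : S ≤ P) {q : Bool × Bool} (hq : q.2 = false) :
    payoff T R P S q ≤ P := by
  rcases q with ⟨_ | _, _ | _⟩ <;> simp_all [payoff]

theorem payoff_le_of_ne (hSP : S ≤ P) (hPR : P ≤ R) {q : Bool × Bool} (hq : q ≠ (false, true)) :
    payoff T R P S q ≤ R := by
  rcases q with ⟨_ | _, _ | _⟩ <;> simp [payoff] at hq ⊢ <;> linarith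

theorem summable_pow_mul_payoff {x : ℝ} (hx0 : 0 ≤ x) (hx1 : x < 1) (q : ℕ → Bool × Bool) :
    Summable fun t => x ^ t * payoff T R P S (q t) := by
  refine Summable.of_norm_bounded
    ((summable_geometric_of_lt_one hx0 hx1).mul_right (|T| + |R| + |P| + |S|)) fun t => ?_
  rw [Real.norm_eq_abs, abs_mul, abs_pow, abs_of_nonneg hx0]
  exact mul_le_mul_of_nonneg_left (abs_payoff_le _) (pow_nonneg hx0 t)

theorem UEq_eq {δ p : ℝ} (hp : p ≠ 0) (s₁ s₂ : Strategy) (h : List (Bool × Bool)) :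
    UEq δ p T R P S s₁ s₂ h
      = (1 - p ^ 2 * δ) * ∑' t, (p ^ 2 * δ) ^ t * payoff T R P S (pairAt s₁ s₂ h t) := by
  have hterm : ∀ t : ℕ, δ ^ t * p ^ (2 * t + 2) * payoff T R P S (pairAt s₁ s₂ h t)
      = p ^ 2 * ((p ^ 2 * δ) ^ t * payoff T R P S (pairAt s₁ s₂ h t)) := fun t => by
    rw [pow_add, pow_mul, mul_pow]; ring
  rw [UEq, tsum_congr hterm, tsum_mul_left, ← mul_assoc, div_mul_cancel₀ _ (pow_ne_zero 2 hp)]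

end Payoff

section Wsls

theorem wsls_append_singleton (l : List (Bool × Bool)) (a b : Bool) :
    wsls (l ++ [(a, b)]) = (a == b) := by
  simp [wsls]

theorem wsls_swapHist (h : List (Bool × Bool)) : wsls (swapHist h) = wsls h := by
  rw [wsls, wsls, swapHist, List.getLast?_map]
  rcases h.getLast? with _ | ⟨_ | _, _ | _⟩ <;> rfl

variable (h : List (Bool × Bool))

theorem fst_pairAt_succ_of_left_wsls (s₂ : Strategy) (t : ℕ) :
    (pairAt wsls s₂ h (t + 1)).1 = ((pairAt wsls s₂ h t).1 == (pairAt wsls s₂ h t).2) :=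
  wsls_append_singleton _ _ _

theorem snd_pairAt_succ_of_right_wsls (s₁ : Strategy) (t : ℕ) :
    (pairAt s₁ wsls h (t + 1)).2 = ((pairAt s₁ wsls h t).2 == (pairAt s₁ wsls h t).1) := by
  simp only [pairAt, pathFrom, swapHist, List.map_append, List.map_cons, List.map_nil,
    Prod.swap_prod_mk]
  exact wsls_append_singleton _ _ _

theorem snd_pairAt_zero_of_right_wsls (s₁ : Strategy) : (pairAt s₁ wsls h 0).2 = wsls h :=
  wsls_swapHist h

theorem pairAt_wsls_wsls_zero : pairAt wsls wsls h 0 = (wsls h, wsls h) :=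
  Prod.ext rfl (wsls_swapHist h)

theorem fst_pairAt_wsls_wsls_eq_snd (t : ℕ) :
    (pairAt wsls wsls h t).1 = (pairAt wsls wsls h t).2 := by
  induction t with
  | zero => rw [pairAt_wsls_wsls_zero]
  | succ t ih => rw [fst_pairAt_succ_of_left_wsls, snd_pairAt_succ_of_right_wsls, ih]

theorem pairAt_wsls_wsls_succ (t : ℕ) : pairAt wsls wsls h (t + 1) = (true, true) := by
  have hfst : (pairAt wsls wsls h (t + 1)).1 = true := by
    rw [fst_pairAt_succ_of_left_wsls, fst_pairAt_wsls_wsls_eq_snd, beq_self_eq_true]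
  exact Prod.ext hfst ((fst_pairAt_wsls_wsls_eq_snd h _).symm.trans hfst)

end Wsls

def deviationLoss (T R P S : ℝ) (s : Strategy) (h : List (Bool × Bool)) (t : ℕ) : ℝ :=
  payoff T R P S (pairAt wsls wsls h t) - payoff T R P S (pairAt s wsls h t)

section DeviationLoss

variable {T R P S : ℝ} {s : Strategy} {h : List (Bool × Bool)}

theorem deviationLoss_succ (t : ℕ) :
    deviationLoss T R P S s h (t + 1) = R - payoff T R P S (pairAt s wsls h (t + 1)) := by
  rw [deviationLoss, pairAt_wsls_wsls_succ, payoff]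

theorem min_le_deviationLoss_zero (hdev : s h ≠ wsls h) :
    min (P - S) (R - T) ≤ deviationLoss T R P S s h 0 := by
  have hpair : pairAt s wsls h 0 = (!wsls h, wsls h) :=
    Prod.ext (Bool.eq_not_of_ne hdev) (snd_pairAt_zero_of_right_wsls h s)
  rw [deviationLoss, pairAt_wsls_wsls_zero, hpair]
  cases wsls h
  · exact min_le_left _ _
  · exact min_le_right _ _

theorem snd_pairAt_one_eq_false (hdev : s h ≠ wsls h) : (pairAt s wsls h 1).2 = false := by
  rw [snd_pairAt_succ_of_right_wsls, snd_pairAt_zero_of_right_wsls]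
  exact beq_eq_false_iff_ne.2 hdev.symm

theorem snd_pairAt_succ_eq_false_of_eq_false_true {t : ℕ}
    (ht : pairAt s wsls h t = (false, true)) : (pairAt s wsls h (t + 1)).2 = false := by
  rw [snd_pairAt_succ_of_right_wsls, ht]
  rfl

theorem sub_le_deviationLoss_succ (hSP : S ≤ P) {t : ℕ}
    (ht : (pairAt s wsls h (t + 1)).2 = false) : R - P ≤ deviationLoss T R P S s h (t + 1) := by
  rw [deviationLoss_succ]
  linarith [payoff_le_of_snd_eq_false (T := T) (R := R) hSP ht]

theorem deviationLoss_succ_nonneg (hSP : S ≤ P) (hPR : P ≤ R) {t : ℕ}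
    (ht : pairAt s wsls h (t + 1) ≠ (false, true)) : 0 ≤ deviationLoss T R P S s h (t + 1) := by
  rw [deviationLoss_succ]
  linarith [payoff_le_of_ne (T := T) hSP hPR ht]

theorem deviationLoss_succ_of_eq_false_true {t : ℕ}
    (ht : pairAt s wsls h (t + 1) = (false, true)) :
    deviationLoss T R P S s h (t + 1) = R - T := by
  rw [deviationLoss_succ, ht, payoff]

theorem summable_pow_mul_deviationLoss {x : ℝ} (hx0 : 0 ≤ x) (hx1 : x < 1) :
    Summable fun t => x ^ t * deviationLoss T R P S s h t := by
  simpa only [deviationLoss, mul_sub] using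
    (summable_pow_mul_payoff hx0 hx1 _).sub (summable_pow_mul_payoff hx0 hx1 _)

theorem le_tsum_pow_mul_deviationLoss (hSP : S ≤ P) (hPR : P ≤ R) {x : ℝ} (hx0 : 0 ≤ x)
    (hx1 : x < 1) (hpair : 0 ≤ R - T + x * (R - P)) (hdev : s h ≠ wsls h) :
    min (P - S) (R - T) + x * (R - P) ≤ ∑' t, x ^ t * deviationLoss T R P S s h t := by
  set L := deviationLoss T R P S s h
  have hs : Summable fun t => x ^ t * L t := summable_pow_mul_deviationLoss hx0 hx1
  have htail : 0 ≤ ∑' t, x ^ (t + 2) * L (t + 2) := by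
    refine tsum_nonneg_of_pairing ((summable_nat_add_iff 2).2 hs)
      (fun t => pairAt s wsls h (t + 2) = (false, true)) (fun t ht => ?_) (fun t ht => ?_)
      (fun t ht => ?_)
    · exact mul_nonneg (pow_nonneg hx0 _) (deviationLoss_succ_nonneg hSP hPR ht)
    · exact mul_nonneg (pow_nonneg hx0 _) ((sub_nonneg.2 hPR).trans
        (sub_le_deviationLoss_succ hSP (snd_pairAt_succ_eq_false_of_eq_false_true ht)))
    · have hnext : R - P ≤ L (t + 3) :=
        sub_le_deviationLoss_succ hSP (snd_pairAt_succ_eq_false_of_eq_false_true ht)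
      calc 0 ≤ x ^ (t + 2) * (R - T + x * L (t + 3)) :=
            mul_nonneg (pow_nonneg hx0 _) (hpair.trans (by gcongr))
        _ = x ^ (t + 2) * L (t + 2) + x ^ (t + 1 + 2) * L (t + 1 + 2) := by
            have hL : L (t + 2) = R - T := deviationLoss_succ_of_eq_false_true ht
            rw [hL]
            ring_nf
  have h0 : min (P - S) (R - T) ≤ L 0 := min_le_deviationLoss_zero hdev
  have h1 : x * (R - P) ≤ x * L 1 :=
    mul_le_mul_of_nonneg_left (sub_le_deviationLoss_succ hSP (snd_pairAt_one_eq_false hdev)) hx0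
  rw [← hs.sum_add_tsum_nat_add 2]
  simp only [sum_range_succ, sum_range_zero, pow_zero, pow_one]
  linarith

end DeviationLoss

theorem UEq_wsls_sub_UEq {T R P S δ p : ℝ} (hp : p ≠ 0) (hx0 : 0 ≤ p ^ 2 * δ)
    (hx1 : p ^ 2 * δ < 1) (s : Strategy) (h : List (Bool × Bool)) :
    UEq δ p T R P S wsls wsls h - UEq δ p T R P S s wsls h
      = (1 - p ^ 2 * δ) * ∑' t, (p ^ 2 * δ) ^ t * deviationLoss T R P S s h t := by
  rw [UEq_eq hp, UEq_eq hp, ← mul_sub,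
    ← (summable_pow_mul_payoff hx0 hx1 _).tsum_sub (summable_pow_mul_payoff hx0 hx1 _)]
  simp only [deviationLoss, mul_sub]

theorem wsls_uniformly_strict_subgame_perfect_general
    (T R P S : ℝ) (hRP : P < R) (hPS : S < P)
    (ε : ℝ) (hε0 : 0 < ε) (hε1 : ε < 2 * R - (T + P)) :
    ∃ C₀ δ₀ p₀ : ℝ,
      C₀ = min (P - S) (2 * R - (T + P) - ε) ∧ 0 < C₀ ∧
      0 ≤ δ₀ ∧ δ₀ < 1 ∧ 0 ≤ p₀ ∧ p₀ < 1 ∧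
      ∀ δ p : ℝ, δ₀ < δ → δ < 1 → p₀ < p → p < 1 →
        ∀ s : Strategy, ∀ h : List (Bool × Bool), s h ≠ wsls h →
          (1 - p ^ 2 * δ) * C₀ <
            UEq δ p T R P S wsls wsls h - UEq δ p T R P S s wsls h := by
  have hRP' : 0 < R - P := sub_pos.2 hRP
  obtain ⟨q, hq0, hq1, hq⟩ := exists_one_sub_sq_mul_lt (div_pos hε0 hRP')
  refine ⟨_, q, q, rfl, lt_min (sub_pos.2 hPS) (by linarith), hq0, hq1, hq0, hq1, ?_⟩
  intro δ p hδ hδ1 hp hp1 s h hdev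
  have hp0 : 0 < p := hq0.trans_lt hp
  have hx0 : 0 < p ^ 2 * δ := by have := hq0.trans_lt hδ; positivity
  have hx1 : p ^ 2 * δ < 1 := by nlinarith
  have hxε : (1 - p ^ 2 * δ) * (R - P) < ε := (lt_div_iff₀ hRP').1 (hq δ p hδ hδ1 hp hp1)
  have hC₀ : min (P - S) (2 * R - (T + P) - ε) < min (P - S) (R - T) + p ^ 2 * δ * (R - P) := by
    rw [← min_add_add_right, lt_min_iff]
    constructor
    · linarith [min_le_left (P - S) (2 * R - (T + P) - ε), mul_pos hx0 hRP']
    · linarith [min_le_right (P - S) (2 * R - (T + P) - ε)]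
  rw [UEq_wsls_sub_UEq hp0.ne' hx0.le hx1]
  refine mul_lt_mul_of_pos_left (hC₀.trans_le ?_) (sub_pos.2 hx1)
  exact le_tsum_pow_mul_deviationLoss hPS.le hRP.le hx0.le hx1 (by linarith) hdev

theorem wsls_uniformly_strict_subgame_perfect
    (T R P S : ℝ) (hTR : R < T) (hRP : P < R) (hPS : S < P)
    (heff : T + S < 2 * R) (hTP : T + P < 2 * R)
    (ε : ℝ) (hε0 : 0 < ε) (hε1 : ε < 2 * R - (T + P)) :
    ∃ C₀ δ₀ p₀ : ℝ,
      C₀ = min (P - S) (2 * R - (T + P) - ε) ∧ 0 < C₀ ∧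
      0 ≤ δ₀ ∧ δ₀ < 1 ∧ 0 ≤ p₀ ∧ p₀ < 1 ∧
      ∀ δ p : ℝ, δ₀ < δ → δ < 1 → p₀ < p → p < 1 →
        ∀ s : Strategy, ∀ h : List (Bool × Bool), s h ≠ wsls h →
          (1 - p ^ 2 * δ) * C₀ <
            UEq δ p T R P S wsls wsls h - UEq δ p T R P S s wsls h :=
  wsls_uniformly_strict_subgame_perfect_general T R P S hRP hPS ε hε0 hε1
end

section
/- In the decomposition where U(w,w) − U(s,w) = B₂(R−S) + B₃(R−T) + B₄(R−P) with B_i ≥ 0, the swapped difference satisfies U(w,w) − U(w,s) = B₂(R−T) + B₃(R−S) + B₄(R−P) = L + (B₃−B₂)(T−S) where L = U(w,w) − U(s,w); hence if additionally L ≥ B₃[(1+δ)R − (T+P)] > 0 and B₃ > 0, then (U(w,w) − U(w,s)) / (U(w,w) − U(s,w)) ≤ 1 + (T−S)/((1+δ)R − (T+P)). -/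
theorem wsls_swapped_difference_ratio_bound
    (T R P S δ : ℝ) (hTR : R < T) (hRP : P < R) (hPS : S < P)
    (hTP : T + P < 2 * R) (hδ0 : 0 < δ) (hδ1 : δ < 1)
    (hδTP : T + P < (1 + δ) * R)
    (B₂ B₃ B₄ L D : ℝ)
    (hB₂ : 0 ≤ B₂) (hB₃ : 0 ≤ B₃) (hB₄ : 0 ≤ B₄)
    (hL : L = B₂ * (R - S) + B₃ * (R - T) + B₄ * (R - P))
    (hD : D = B₂ * (R - T) + B₃ * (R - S) + B₄ * (R - P))
    (hLpos : 0 < L) :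
    D = L + (B₃ - B₂) * (T - S) ∧
    (B₃ * ((1 + δ) * R - (T + P)) ≤ L → 0 < B₃ →
      D / L ≤ 1 + (T - S) / ((1 + δ) * R - (T + P))) := by
  constructor
  · rw [hL, hD]; ring
  · intro h1 h2
    have hK : 0 < (1 + δ) * R - (T + P) := by linarith
    rw [div_le_iff₀ hLpos]
    have hD' : D ≤ L + B₃ * (T - S) := by nlinarith
    have key : B₃ * (T - S) ≤ (T - S) / ((1 + δ) * R - (T + P)) * L := by
      rw [div_mul_eq_mul_div, le_div_iff₀ hK]
      nlinarith
    nlinarith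
end
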